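/- Let M be a compact orientable 3-manifold with boundary whose relative simplicial volume ‖M,∂M‖ vanishes. Then for every ε > 0 there exists a relative fundamental cycle z ∈ C₃(M,∂M;ℝ) such that ‖z‖₁ ≤ ε and ‖∂z‖₁ ≤ ε. -/

import Mathlib

noncomputable section

open Set Topology
open scoped ENNReal Classical

/-- Euclidean `n`-space. -/
abbrev Euc (n : ℕ) : Type := EuclideanSpace ℝ (Fin n)

/-! ### Singular simplices and locally finite chains -/

/-- The topological standard `n`-simplex. -/
abbrev TopSimplex (n : ℕ) : Type := ↥(stdSimplex ℝ (Fin (n + 1)))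

/-- Singular `n`-simplices of a space `X`. -/
abbrev SingularSimplex (n : ℕ) (X : Type*) [TopologicalSpace X] := C(TopSimplex n, X)

/-- The `i`-th face embedding `Δⁿ → Δⁿ⁺¹` (inserting a zero coordinate at position `i`). -/
def simplexFace {n : ℕ} (i : Fin (n + 2)) : C(TopSimplex n, TopSimplex (n + 1)) where
  toFun x := ⟨fun j => if h : ∃ k, i.succAbove k = j then x.1 h.choose else 0, by
    have key : ∀ k : Fin (n + 1),
        (if h : ∃ k', i.succAbove k' = i.succAbove k then x.1 h.choose else 0) = x.1 k := by
      intro k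
      rw [dif_pos ⟨k, rfl⟩]
      exact congrArg x.1 (Fin.succAbove_right_injective
        (Exists.choose_spec (⟨k, rfl⟩ : ∃ k', i.succAbove k' = i.succAbove k)))
    constructor
    · intro j
      by_cases h : ∃ k, i.succAbove k = j
      · simpa only [dif_pos h] using x.2.1 h.choose
      · simp only [dif_neg h]; exact le_rfl
    · rw [Fin.sum_univ_succAbove
        (fun j => if h : ∃ k, i.succAbove k = j then x.1 h.choose else 0) i]
      rw [dif_neg (by rintro ⟨k, hk⟩; exact Fin.succAbove_ne i k hk)]
      rw [zero_add, Finset.sum_congr rfl fun k _ => key k]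
      exact x.2.2⟩
  continuous_toFun := by
    refine Continuous.subtype_mk (continuous_pi fun j => ?_) _
    by_cases h : ∃ k, i.succAbove k = j
    · simp only [dif_pos h]; exact (continuous_apply h.choose).comp continuous_subtype_val
    · simpa only [dif_neg h] using continuous_const

/-- A locally finite singular `n`-chain with coefficients in `R`: a formal sum
`∑ aₛ σ` such that every compact set meets the images of only finitely many
simplices with nonzero coefficient. -/
structure LFChain (R : Type*) [Zero R] (n : ℕ) (X : Type*) [TopologicalSpace X] where
  coeff : SingularSimplex n X → R
  locFin : ∀ K : Set X, IsCompact K →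
    {σ : SingularSimplex n X | coeff σ ≠ 0 ∧ (Set.range ⇑σ ∩ K).Nonempty}.Finite

namespace LFChain

/-- The coefficient of `τ` in the boundary `∂c` of a locally finite chain `c`. -/
def bdryCoeff {R : Type*} [CommRing R] {X : Type*} [TopologicalSpace X] :
    {n : ℕ} → LFChain R n X → SingularSimplex (n - 1) X → R
  | 0, _, _ => 0
  | (m + 1), c, τ => ∑ᶠ σ : SingularSimplex (m + 1) X,
      c.coeff σ * ∑ i : Fin (m + 2), (-1 : R) ^ (i : ℕ) *
        (if σ.comp (simplexFace i) = τ then 1 else 0)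

/-- The chain `c` is supported in the subset `A`. -/
def SupportedIn {R : Type*} [Zero R] {n : ℕ} {X : Type*} [TopologicalSpace X]
    (c : LFChain R n X) (A : Set X) : Prop :=
  ∀ σ, c.coeff σ ≠ 0 → Set.range ⇑σ ⊆ A

/-- The ℓ¹-norm of a locally finite real chain. -/
def l1Norm {n : ℕ} {X : Type*} [TopologicalSpace X] (c : LFChain ℝ n X) : ℝ≥0∞ :=
  ∑' σ, ENNReal.ofReal |c.coeff σ|

/-- The ℓ¹-norm of the boundary of a locally finite real chain. -/
def bdryNorm {n : ℕ} {X : Type*} [TopologicalSpace X] (c : LFChain ℝ n X) : ℝ≥0∞ :=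
  ∑' τ, ENNReal.ofReal |c.bdryCoeff τ|

end LFChain

/-- `z` is an integral relative fundamental cycle of the pair `(X, B)` in dimension `d`:
its boundary is supported in `B`, and for every `x ∉ B` its class generates the relative
(locally finite) homology of the pair `(X, X ∖ {x})`, i.e. every relative `d`-cycle of
`(X, X ∖ {x})` is, modulo boundaries and chains supported in `X ∖ {x}`, an integral
multiple of `z`. -/
def IsIntFundCycle (d : ℕ) (X : Type*) [TopologicalSpace X] (B : Set X)
    (z : LFChain ℤ d X) : Prop :=
  (∀ τ, z.bdryCoeff τ ≠ 0 → Set.range ⇑τ ⊆ B) ∧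
  ∀ x, x ∉ B → ∀ c : LFChain ℤ d X,
    (∀ τ, c.bdryCoeff τ ≠ 0 → Set.range ⇑τ ⊆ {x}ᶜ) →
    ∃ (k : ℤ) (b : LFChain ℤ (d + 1) X) (a : LFChain ℤ d X), a.SupportedIn {x}ᶜ ∧
      ∀ σ, c.coeff σ = k * z.coeff σ + b.bdryCoeff σ + a.coeff σ

/-- `c` is a real relative fundamental cycle of the pair `(X, B)`: it differs from (the real
chain induced by) an integral fundamental cycle by a boundary plus a chain supported in `B`. -/
def IsRealFundCycle (d : ℕ) (X : Type*) [TopologicalSpace X] (B : Set X)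
    (c : LFChain ℝ d X) : Prop :=
  ∃ z : LFChain ℤ d X, IsIntFundCycle d X B z ∧
    ∃ (b : LFChain ℝ (d + 1) X) (a : LFChain ℝ d X), a.SupportedIn B ∧
      ∀ σ, c.coeff σ = (z.coeff σ : ℝ) + b.bdryCoeff σ + a.coeff σ

/-- The pair `(X, B)` admits an integral fundamental cycle in dimension `d`. -/
def HasFundClass (d : ℕ) (X : Type*) [TopologicalSpace X] (B : Set X) : Prop :=
  ∃ z : LFChain ℤ d X, IsIntFundCycle d X B z

/-- The (relative, locally finite) simplicial volume `‖X, B‖` of the pair `(X, B)`: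
the infimum of the ℓ¹-norms of all real relative fundamental cycles. -/
def relSimplicialVolume (d : ℕ) (X : Type*) [TopologicalSpace X] (B : Set X) : ℝ≥0∞ :=
  ⨅ c : {c : LFChain ℝ d X // IsRealFundCycle d X B c}, (c : LFChain ℝ d X).l1Norm

/-- The simplicial volume `‖X‖` of a manifold without boundary (defined via
locally finite fundamental cycles). -/
def simplicialVolume (d : ℕ) (X : Type*) [TopologicalSpace X] : ℝ≥0∞ :=
  relSimplicialVolume d X ∅

/-! ### Topological manifolds -/

/-- `M` is locally euclidean of dimension `d`. -/
def IsLocEuclidean (d : ℕ) (M : Type*) [TopologicalSpace M] : Prop :=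
  ∀ x : M, ∃ U : Set M, x ∈ U ∧ IsOpen U ∧ Nonempty (↥U ≃ₜ Euc d)

/-- A (second countable, Hausdorff) topological `d`-manifold without boundary. -/
def IsTopManifold (d : ℕ) (M : Type*) [TopologicalSpace M] : Prop :=
  T2Space M ∧ SecondCountableTopology M ∧ IsLocEuclidean d M

/-- The closed half space of `Euc d`. -/
def halfSpace (d : ℕ) : Set (Euc d) := {y | ∀ h : 0 < d, 0 ≤ y ⟨0, h⟩}

/-- A (second countable, Hausdorff) topological `d`-manifold, possibly with boundary. -/
def IsTopManifoldWithBoundary (d : ℕ) (M : Type*) [TopologicalSpace M] : Prop :=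
  T2Space M ∧ SecondCountableTopology M ∧
    ∀ x : M, ∃ U : Set M, x ∈ U ∧ IsOpen U ∧
      ∃ V : Set ↥(halfSpace d), IsOpen V ∧ Nonempty (↥U ≃ₜ ↥V)

/-- The intrinsic (topological) boundary of a `d`-manifold with boundary: the set
of points having no neighbourhood homeomorphic to `ℝᵈ`. -/
def mfdBoundary (d : ℕ) (M : Type*) [TopologicalSpace M] : Set M :=
  {x | ¬ ∃ U : Set M, x ∈ U ∧ IsOpen U ∧ Nonempty (↥U ≃ₜ Euc d)}

/-- Orientability of a (connected) manifold without boundary, expressed through the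
existence of an integral fundamental cycle. -/
def OrientableMfd (d : ℕ) (M : Type*) [TopologicalSpace M] : Prop := HasFundClass d M ∅

/-- The simplicial volume `‖X, ∂X‖` of a manifold rel its (intrinsic) boundary. -/
def svRel (d : ℕ) (X : Type*) [TopologicalSpace X] : ℝ≥0∞ :=
  relSimplicialVolume d X (mfdBoundary d X)

/-! ### Model shapes -/

abbrev Circle1 : Type := ↥(Metric.sphere (0 : Euc 2) 1)
abbrev Sphere2 : Type := ↥(Metric.sphere (0 : Euc 3) 1)
abbrev Disk2 : Type := ↥(Metric.closedBall (0 : Euc 2) 1)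
abbrev Ball3 : Type := ↥(Metric.closedBall (0 : Euc 3) 1)
abbrev Torus2 : Type := Circle1 × Circle1
abbrev SolidTorus : Type := Disk2 × Circle1

def IsEmbeddedSphere2 {M : Type*} [TopologicalSpace M] (S : Set M) : Prop :=
  Nonempty (↥S ≃ₜ Sphere2)

def IsEmbeddedTorus {M : Type*} [TopologicalSpace M] (S : Set M) : Prop :=
  Nonempty (↥S ≃ₜ Torus2)

def IsEmbeddedCircle {M : Type*} [TopologicalSpace M] (γ : Set M) : Prop :=
  Nonempty (↥γ ≃ₜ Circle1)

def IsClosedBall3 {M : Type*} [TopologicalSpace M] (B : Set M) : Prop :=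
  Nonempty (↥B ≃ₜ Ball3)

def IsSolidTorus {M : Type*} [TopologicalSpace M] (N : Set M) : Prop :=
  Nonempty (↥N ≃ₜ SolidTorus)

/-- `B` is an embedded closed `3`-ball whose boundary sphere is the subset `S`. -/
def IsBall3WithBoundary {M : Type*} [TopologicalSpace M] (B S : Set M) : Prop :=
  ∃ h : ↥B ≃ₜ Ball3, Subtype.val '' (⇑h.symm '' {y : Ball3 | ‖(y : Euc 3)‖ = 1}) = S

/-- The embedded `2`-sphere `S` bounds a closed `3`-ball in `M`. -/
def BoundsBall3 {M : Type*} [TopologicalSpace M] (S : Set M) : Prop :=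
  ∃ B : Set M, IsBall3WithBoundary B S

/-- A `3`-manifold is irreducible if every embedded `2`-sphere bounds a closed `3`-ball. -/
def Irreducible3 (M : Type*) [TopologicalSpace M] : Prop :=
  ∀ S : Set M, IsEmbeddedSphere2 S → BoundsBall3 S

/-- `D` is an embedded closed `2`-disc whose boundary circle is the subset `γ`. -/
def IsDisk2WithBoundary {M : Type*} [TopologicalSpace M] (D γ : Set M) : Prop :=
  ∃ h : ↥D ≃ₜ Disk2, Subtype.val '' (⇑h.symm '' {y : Disk2 | ‖(y : Euc 2)‖ = 1}) = γ

/-- The surface `S ⊆ M` is compressible in the subset `A ⊆ M`: some embedded circle in `S`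
bounds no disc inside `S` but bounds an embedded disc `D ⊆ A` with `D ∩ S = γ`. -/
def IsCompressibleIn {M : Type*} [TopologicalSpace M] (S A : Set M) : Prop :=
  ∃ γ : Set M, γ ⊆ S ∧ IsEmbeddedCircle γ ∧
    (¬ ∃ D : Set M, D ⊆ S ∧ IsDisk2WithBoundary D γ) ∧
    ∃ D : Set M, D ⊆ A ∧ IsDisk2WithBoundary D γ ∧ D ∩ S = γ

/-! ### Loops and `π₁` conditions -/

/-- `γ` is a loop contained in `S`. -/
def IsLoopIn {M : Type*} [TopologicalSpace M] (S : Set M) (γ : C(unitInterval, M)) : Prop :=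
  (∀ t, γ t ∈ S) ∧ γ 0 = γ 1

/-- The loop `γ` is null-homotopic (rel its base point), through a homotopy contained in `T`. -/
def NullHomotopicIn {M : Type*} [TopologicalSpace M] (T : Set M)
    (γ : C(unitInterval, M)) : Prop :=
  ∃ H : C(unitInterval × unitInterval, M), (∀ p, H p ∈ T) ∧
    (∀ t, H (0, t) = γ t) ∧ (∀ t, H (1, t) = γ 0) ∧
    (∀ s, H (s, 0) = γ 0) ∧ (∀ s, H (s, 1) = γ 0)

/-- The inclusion `S ⊆ T` is `π₁`-injective (for every base point). -/
def Pi1InjectiveIncl {M : Type*} [TopologicalSpace M] (S T : Set M) : Prop :=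
  ∀ γ : C(unitInterval, M), IsLoopIn S γ → NullHomotopicIn T γ → NullHomotopicIn S γ

/-- The inclusion `S ⊆ T` induces the trivial map on fundamental groups. -/
def Pi1TrivialIncl {M : Type*} [TopologicalSpace M] (S T : Set M) : Prop :=
  ∀ γ : C(unitInterval, M), IsLoopIn S γ → NullHomotopicIn T γ

/-! ### Exhaustions -/

/-- An exhaustion of an open `3`-manifold by compact codimension-zero submanifolds:
`M = ⋃ₙ Mₙ`, each `Mₙ` is a connected compact `3`-manifold with boundary, every component
of `M ∖ int(Mₙ)` is unbounded (not relatively compact), and `Mₙ ⊆ int(Mₙ₊₁)`. -/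
structure IsExhaustion (M : Type*) [TopologicalSpace M] (E : ℕ → Set M) : Prop where
  iUnion_eq : (⋃ n, E n) = Set.univ
  conn : ∀ n, IsConnected (E n)
  cpt : ∀ n, IsCompact (E n)
  mfd : ∀ n, IsTopManifoldWithBoundary 3 ↥(E n)
  bdry_eq : ∀ n, Subtype.val '' mfdBoundary 3 ↥(E n) = frontier (E n)
  subset_int : ∀ n, E n ⊆ interior (E (n + 1))
  unbounded_compl : ∀ n, ∀ x ∈ (interior (E n))ᶜ,
    ¬ IsCompact (closure (connectedComponentIn ((interior (E n))ᶜ) x))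

/-- Every connected component of `S` is an embedded sphere or torus. -/
def SphereOrTorusComponents {M : Type*} [TopologicalSpace M] (S : Set M) : Prop :=
  ∀ x ∈ S, IsEmbeddedSphere2 (connectedComponentIn S x) ∨
    IsEmbeddedTorus (connectedComponentIn S x)

/-- A compact connected codimension-zero submanifold (with boundary) of a `d`-manifold. -/
def IsCompactCodim0Submanifold (d : ℕ) {M : Type*} [TopologicalSpace M] (N : Set M) : Prop :=
  IsCompact N ∧ IsConnected N ∧ IsTopManifoldWithBoundary d ↥N ∧
    Subtype.val '' mfdBoundary d ↥N = frontier N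

/-! Each singular `(n+1)`-simplex has `n + 2` faces, each entering the boundary with sign `±1`,
so `‖∂c‖₁ ≤ (n + 2) ‖c‖₁` for a finite chain `c`. Vanishing of `‖M, ∂M‖` gives relative
fundamental cycles `z` with `‖z‖₁ < ε / 4`, and then `‖∂z‖₁ ≤ 4 ‖z‖₁ ≤ ε`. -/

instance (n : ℕ) : Nonempty (TopSimplex n) :=
  ⟨⟨_, ite_eq_mem_stdSimplex ℝ 0⟩⟩

namespace LFChain

variable {X : Type*} [TopologicalSpace X]

lemma support_coeff_finite [CompactSpace X] {R : Type*} [Zero R] {n : ℕ} (c : LFChain R n X) :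
    (Function.support c.coeff).Finite := by
  refine (c.locFin univ isCompact_univ).subset fun σ hσ => ?_
  obtain ⟨t⟩ : Nonempty (TopSimplex n) := inferInstance
  exact ⟨hσ, σ t, mem_range_self t, mem_univ _⟩

lemma bdryCoeff_eq_sum {R : Type*} [CommRing R] {n : ℕ} (c : LFChain R (n + 1) X)
    {s : Finset (SingularSimplex (n + 1) X)} (hs : Function.support c.coeff ⊆ s)
    (τ : SingularSimplex n X) :
    c.bdryCoeff τ = ∑ σ ∈ s, c.coeff σ * ∑ i : Fin (n + 2), (-1 : R) ^ (i : ℕ) *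
      (if σ.comp (simplexFace i) = τ then 1 else 0) :=
  finsum_eq_finsetSum_of_support_subset _ fun _ hσ => hs (left_ne_zero_of_mul hσ)

lemma ofReal_abs_bdryCoeff_le {n : ℕ} (c : LFChain ℝ (n + 1) X)
    {s : Finset (SingularSimplex (n + 1) X)} (hs : Function.support c.coeff ⊆ s)
    (τ : SingularSimplex n X) :
    ENNReal.ofReal |c.bdryCoeff τ| ≤ ∑ σ ∈ s, ∑ i : Fin (n + 2),
      if σ.comp (simplexFace i) = τ then ENNReal.ofReal |c.coeff σ| else 0 := by
  have hterm : ∀ σ (i : Fin (n + 2)),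
      ‖c.coeff σ * ((-1 : ℝ) ^ (i : ℕ) * if σ.comp (simplexFace i) = τ then 1 else 0)‖ₑ =
        if σ.comp (simplexFace i) = τ then ENNReal.ofReal |c.coeff σ| else 0 := by
    intro σ i
    split_ifs <;> simp [Real.enorm_eq_ofReal_abs]
  rw [← Real.enorm_eq_ofReal_abs, bdryCoeff_eq_sum c hs]
  simp_rw [Finset.mul_sum, ← hterm]
  exact (enorm_sum_le _ _).trans (Finset.sum_le_sum fun σ _ => enorm_sum_le _ _)

lemma bdryNorm_le_of_support_finite {n : ℕ} (c : LFChain ℝ (n + 1) X)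
    (hc : (Function.support c.coeff).Finite) : c.bdryNorm ≤ (n + 2) * c.l1Norm := by
  set s := hc.toFinset
  have hs : Function.support c.coeff ⊆ s := by simp [s]
  calc c.bdryNorm
      ≤ ∑' τ : SingularSimplex n X, ∑ σ ∈ s, ∑ i : Fin (n + 2),
          if σ.comp (simplexFace i) = τ then ENNReal.ofReal |c.coeff σ| else 0 :=
        ENNReal.tsum_le_tsum (c.ofReal_abs_bdryCoeff_le hs)
    _ = ∑ σ ∈ s, ∑ _i : Fin (n + 2), ENNReal.ofReal |c.coeff σ| := by
        rw [Summable.tsum_finsetSum fun _ _ => ENNReal.summable]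
        refine Finset.sum_congr rfl fun σ _ => ?_
        rw [Summable.tsum_finsetSum fun _ _ => ENNReal.summable]
        simp
    _ = (n + 2) * ∑ σ ∈ s, ENNReal.ofReal |c.coeff σ| := by
        simp [Finset.mul_sum]
    _ ≤ (n + 2) * c.l1Norm := by
        gcongr
        exact ENNReal.sum_le_tsum s

lemma bdryNorm_le [CompactSpace X] {n : ℕ} (c : LFChain ℝ (n + 1) X) :
    c.bdryNorm ≤ (n + 2) * c.l1Norm :=
  c.bdryNorm_le_of_support_finite c.support_coeff_finite

end LFChain

theorem exists_small_relative_fundamental_cycle_general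
    (M : Type) [TopologicalSpace M] [CompactSpace M]
    (hvol : svRel 3 M = 0) (ε : ℝ) (hε : 0 < ε) :
    ∃ z : LFChain ℝ 3 M, IsRealFundCycle 3 M (mfdBoundary 3 M) z ∧
      z.l1Norm ≤ ENNReal.ofReal ε ∧ z.bdryNorm ≤ ENNReal.ofReal ε := by
  obtain ⟨⟨z, hz⟩, hsmall⟩ : ∃ z : {c // IsRealFundCycle 3 M (mfdBoundary 3 M) c},
      z.1.l1Norm < ENNReal.ofReal ε / 4 := by
    rw [← iInf_lt_iff, ← relSimplicialVolume, ← svRel, hvol]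
    exact ENNReal.div_pos (ENNReal.ofReal_pos.2 hε).ne' (by norm_num)
  have h4 : 4 * z.l1Norm ≤ ENNReal.ofReal ε := by
    rw [mul_comm, ← ENNReal.le_div_iff_mul_le (by norm_num) (by norm_num)]
    exact hsmall.le
  refine ⟨z, hz, le_trans (le_mul_of_one_le_left zero_le (by norm_num)) h4, ?_⟩
  calc z.bdryNorm ≤ (2 + 2) * z.l1Norm := z.bdryNorm_le
    _ ≤ ENNReal.ofReal ε := by norm_num [h4]

/-- Let `M` be a compact orientable `3`-manifold with boundary whose relative simplicial
volume `‖M, ∂M‖` vanishes. Then for every `ε > 0` there exists a real relative fundamental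
cycle `z ∈ C₃(M, ∂M; ℝ)` with `‖z‖₁ ≤ ε` and `‖∂z‖₁ ≤ ε`. -/
theorem exists_small_relative_fundamental_cycle
    (M : Type) [TopologicalSpace M] [CompactSpace M]
    (hM : IsTopManifoldWithBoundary 3 M) (hconn : ConnectedSpace M)
    (hbdry : (mfdBoundary 3 M).Nonempty)
    (hor : HasFundClass 3 M (mfdBoundary 3 M))
    (hvol : svRel 3 M = 0) (ε : ℝ) (hε : 0 < ε) :
    ∃ z : LFChain ℝ 3 M, IsRealFundCycle 3 M (mfdBoundary 3 M) z ∧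
      z.l1Norm ≤ ENNReal.ofReal ε ∧ z.bdryNorm ≤ ENNReal.ofReal ε :=
  exists_small_relative_fundamental_cycle_general M hvol ε hε
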